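/- arXiv:1602.03722 — 6 statements merged into one kernel-verified Lean document; each statement's English description precedes it below -/
import Mathlib

section
/- If there exists a perfect binary sequence of length n > 1 (all nontrivial periodic autocorrelations equal to zero), then n is divisible by 4. -/
/-!
Summing the autocorrelations over all shifts gives `∑ᵤ R_u = (∑ₖ A k)²`, while perfection
leaves only `R_0 = n`; hence `n = S²` with `S = ∑ₖ A k`. Moreover `R_1` is a sum of `n` signs,
so `R_1 = 0` forces `n` to be even. Then `S` is even and `4 ∣ S² = n`.
-/

open Finset

theorem Finset.sum_range_add_mod {M : Type*} [AddCommMonoid M] (f : ℕ → M) (k n : ℕ) :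
    ∑ u ∈ range n, f ((k + u) % n) = ∑ j ∈ range n, f j := by
  calc ∑ u ∈ range n, f ((k + u) % n) = ∑ x ∈ Ico k (k + n), f (x % n) := by
        rw [sum_Ico_eq_sum_range, add_tsub_cancel_left]
    _ = ∑ j ∈ (Ico k (k + n)).image (· % n), f j := (sum_image (Nat.mod_injOn_Ico k n)).symm
    _ = ∑ j ∈ range n, f j := by rw [Nat.image_Ico_mod]

theorem Int.even_sum_iff_even_card_of_sign {ι : Type*} {s : Finset ι} {f : ι → ℤ}
    (hf : ∀ i ∈ s, f i = 1 ∨ f i = -1) : Even (∑ i ∈ s, f i) ↔ Even #s := by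
  have hcast : ∀ i ∈ s, (f i : ZMod 2) = 1 := by
    intro i hi
    rcases hf i hi with h | h <;> rw [h] <;> decide
  rw [← ZMod.intCast_eq_zero_iff_even, ← ZMod.natCast_eq_zero_iff_even, Int.cast_sum,
    sum_congr rfl hcast, sum_const, nsmul_one]

def periodicAutocorr (n : ℕ) (A : ℕ → ℤ) (u : ℕ) : ℤ :=
  ∑ k ∈ range n, A k * A ((k + u) % n)

theorem sum_periodicAutocorr (n : ℕ) (A : ℕ → ℤ) :
    ∑ u ∈ range n, periodicAutocorr n A u = (∑ k ∈ range n, A k) ^ 2 := by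
  simp only [periodicAutocorr]
  rw [sum_comm, sq, sum_mul]
  refine sum_congr rfl fun k _ => ?_
  rw [← mul_sum, sum_range_add_mod, mul_comm]

section

variable {n : ℕ} {A : ℕ → ℤ}

theorem periodicAutocorr_zero (hA : ∀ k < n, A k = 1 ∨ A k = -1) :
    periodicAutocorr n A 0 = n := by
  have hsq : ∀ k ∈ range n, A k * A ((k + 0) % n) = 1 := by
    intro k hk
    rw [mem_range] at hk
    rw [add_zero, Nat.mod_eq_of_lt hk]
    rcases hA k hk with h | h <;> rw [h] <;> norm_num
  rw [periodicAutocorr, sum_congr rfl hsq, sum_const, card_range, nsmul_one]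

theorem even_of_periodicAutocorr_eq_zero (hn : 0 < n) (hA : ∀ k < n, A k = 1 ∨ A k = -1)
    {u : ℕ} (hu : periodicAutocorr n A u = 0) : Even n := by
  have hsign : ∀ k ∈ range n, A k * A ((k + u) % n) = 1 ∨ A k * A ((k + u) % n) = -1 := by
    intro k hk
    rcases hA k (mem_range.mp hk) with h | h <;>
      rcases hA _ (Nat.mod_lt (k + u) hn) with h' | h' <;> simp [h, h']
  rw [periodicAutocorr] at hu
  simpa using (Int.even_sum_iff_even_card_of_sign hsign).mp (hu ▸ Even.zero)

theorem eq_sq_sum_of_perfect (hA : ∀ k < n, A k = 1 ∨ A k = -1)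
    (hperf : ∀ u, 0 < u → u < n → periodicAutocorr n A u = 0) :
    (n : ℤ) = (∑ k ∈ range n, A k) ^ 2 := by
  rcases Nat.eq_zero_or_pos n with rfl | hn
  · simp
  rw [← sum_periodicAutocorr, sum_eq_single_of_mem 0 (mem_range.mpr hn)
    fun u hu hu0 => hperf u (Nat.pos_of_ne_zero hu0) (mem_range.mp hu), periodicAutocorr_zero hA]

end

theorem perfect_binary_length_div_four (n : ℕ) (hn : 1 < n) (A : ℕ → ℤ)
    (hA : ∀ k < n, A k = 1 ∨ A k = -1)
    (hperf : ∀ u, 0 < u → u < n →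
      (∑ k ∈ Finset.range n, A k * A ((k + u) % n)) = 0) :
    4 ∣ n := by
  have hsq := eq_sq_sum_of_perfect hA hperf
  have hn_even : Even n := even_of_periodicAutocorr_eq_zero (by omega) hA (hperf 1 one_pos hn)
  obtain ⟨t, ht⟩ : Even (∑ k ∈ range n, A k) := by
    rw [← Int.even_pow' two_ne_zero, ← hsq]
    exact_mod_cast hn_even
  have h4 : (4 : ℤ) ∣ n := ⟨t ^ 2, by rw [hsq, ht]; ring⟩
  exact_mod_cast h4
end

section
/- The nontrivial periodic autocorrelations of a Legendre sequence of prime length p with p ≡ 3 (mod 4) are all equal to −1: for 0 < u < p, R_u(A) = −1. -/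
/-!
On `ZMod p` the Legendre sequence is `χ + δ₀`, with `χ` the quadratic character and `δ₀` the
indicator of `0`. Expanding its autocorrelation at a shift `b ≠ 0` gives
`∑ₓ χ(x) χ(x + b) + χ(-b) + χ(b)`. Since `χ = χ⁻¹`, the sum is `-1`, as `∑ₓ χ(x) χ⁻¹(x + b)` is
for every nontrivial character (after rescaling, a Jacobi sum). Finally `χ(-1) = -1` because `-1`
is not a square when `p ≡ 3 (mod 4)`, so the two boundary terms cancel.
-/

open Finset
open scoped Classical

theorem MulChar.sum_mul_inv_apply_add {F R : Type*} [Field F] [Fintype F] [CommRing R]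
    [IsDomain R] {χ : MulChar F R} (hχ : χ ≠ 1) {b : F} (hb : b ≠ 0) :
    ∑ x, χ x * χ⁻¹ (x + b) = -1 := by
  -- the substitution `x = -b t` turns the sum into `χ (-1) * J(χ, χ⁻¹)`
  have hsubst : ∀ t : F, χ (-b * t) * χ⁻¹ (-b * t + b) = χ (-1) * (χ t * χ⁻¹ (1 - t)) := by
    intro t
    have hbb : χ b * χ⁻¹ b = 1 := by
      rw [MulChar.inv_apply', ← map_mul, mul_inv_cancel₀ hb, map_one]
    calc χ (-b * t) * χ⁻¹ (-b * t + b)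
        = χ (-1) * (χ t * χ⁻¹ (1 - t)) * (χ b * χ⁻¹ b) := by
          rw [show -b * t + b = b * (1 - t) by ring, show -b * t = -1 * b * t by ring]
          simp only [map_mul]; ring
      _ = χ (-1) * (χ t * χ⁻¹ (1 - t)) := by rw [hbb, mul_one]
  have hneg1 : χ (-1) * χ (-1) = 1 := by
    rw [← map_mul, neg_one_mul, neg_neg, map_one]
  rw [← Equiv.sum_comp (Equiv.mulLeft₀ (-b) (neg_ne_zero.mpr hb))]
  simp only [Equiv.mulLeft₀_apply, hsubst, ← mul_sum]
  rw [← jacobiSum, jacobiSum_nontrivial_inv hχ, mul_neg, hneg1]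

theorem quadraticChar_sum_mul_apply_add {F : Type*} [Field F] [Fintype F] [DecidableEq F]
    (hF : ringChar F ≠ 2) {b : F} (hb : b ≠ 0) :
    ∑ x, quadraticChar F x * quadraticChar F (x + b) = -1 := by
  conv_lhs => enter [2, x, 2]; rw [← (quadraticChar_isQuadratic F).inv]
  exact MulChar.sum_mul_inv_apply_add (quadraticChar_ne_one hF) hb

theorem quadraticChar_neg_of_card_mod_four {F : Type*} [Field F] [Fintype F] [DecidableEq F]
    (hF : Fintype.card F % 4 = 3) (a : F) :
    quadraticChar F (-a) = -quadraticChar F a := by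
  have h : quadraticChar F (-1) = -1 :=
    quadraticChar_neg_one_iff_not_isSquare.mpr (FiniteField.isSquare_neg_one_iff.not_left.mpr hF)
  rw [neg_eq_neg_one_mul a, map_mul, h, neg_one_mul]

theorem sum_mul_add_ite_zero {G R : Type*} [AddCommGroup G] [Fintype G] [DecidableEq G]
    [CommRing R] (f : G → R) {b : G} (hb : b ≠ 0) :
    ∑ x, (f x + if x = 0 then 1 else 0) * (f (x + b) + if x + b = 0 then 1 else 0) =
      ∑ x, f x * f (x + b) + f (-b) + f b := by
  simp only [add_mul, mul_add, sum_add_distrib, mul_ite, ite_mul, mul_one, one_mul, mul_zero,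
    zero_mul, add_eq_zero_iff_eq_neg, sum_ite_eq', mem_univ, if_true, neg_eq_zero, hb, if_false,
    zero_add]
  ring

def legendreSeq (F : Type*) [Field F] [Fintype F] [DecidableEq F] (a : F) : ℤ :=
  if a = 0 then 1 else quadraticChar F a

theorem legendreSeq_eq_quadraticChar_add {F : Type*} [Field F] [Fintype F] [DecidableEq F]
    (a : F) : legendreSeq F a = quadraticChar F a + if a = 0 then 1 else 0 := by
  by_cases ha : a = 0 <;> simp [legendreSeq, ha]

theorem legendreSeq_autocorrelation {F : Type*} [Field F] [Fintype F] [DecidableEq F]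
    (hF : Fintype.card F % 4 = 3) {b : F} (hb : b ≠ 0) :
    ∑ x, legendreSeq F x * legendreSeq F (x + b) = -1 := by
  have hchar : ringChar F ≠ 2 := by
    rw [Ne, FiniteField.even_card_iff_char_two]; omega
  simp only [legendreSeq_eq_quadraticChar_add]
  rw [sum_mul_add_ite_zero _ hb, quadraticChar_sum_mul_apply_add hchar hb,
    quadraticChar_neg_of_card_mod_four hF]
  ring

theorem ZMod.sum_range_natCast {n : ℕ} [NeZero n] {M : Type*} [AddCommMonoid M]
    (f : ZMod n → M) :
    ∑ k ∈ range n, f k = ∑ a, f a :=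
  sum_nbij' (fun k => (k : ZMod n)) ZMod.val (fun _ _ => mem_univ _)
    (fun a _ => mem_range.mpr a.val_lt) (fun _ hk => ZMod.val_cast_of_lt (mem_range.mp hk))
    (fun a _ => ZMod.natCast_zmod_val a) (fun _ _ => rfl)

theorem legendreSeq_natCast (p : ℕ) [Fact p.Prime] (k : ℕ) :
    legendreSeq (ZMod p) k =
      if k % p = 0 then 1 else if IsSquare ((k : ZMod p)) then 1 else -1 := by
  have hmod : k % p = 0 ↔ (k : ZMod p) = 0 := by
    rw [ZMod.natCast_eq_zero_iff, Nat.dvd_iff_mod_eq_zero]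
  by_cases hk : (k : ZMod p) = 0
  · rw [legendreSeq, if_pos hk, if_pos (hmod.mpr hk)]
  · rw [legendreSeq, if_neg hk, if_neg (mt hmod.mp hk)]
    split_ifs with hsq
    · exact (quadraticChar_one_iff_isSquare hk).mpr hsq
    · exact quadraticChar_neg_one_iff_not_isSquare.mpr hsq

theorem legendre_autocorrelation_three_mod_four (p : ℕ) (hp : p.Prime) (h3 : p % 4 = 3)
    (u : ℕ) (hu : 0 < u) (hup : u < p) :
    let A : ℕ → ℤ := fun k =>
      if k % p = 0 then 1 else if IsSquare ((k : ZMod p)) then 1 else -1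
    (∑ k ∈ Finset.range p, A k * A ((k + u) % p)) = -1 := by
  intro A
  have := Fact.mk hp
  have hu0 : (u : ZMod p) ≠ 0 := by
    rw [Ne, ZMod.natCast_eq_zero_iff]
    exact fun h => (Nat.le_of_dvd hu h).not_gt hup
  -- `A` decides `IsSquare` classically, whereas `legendreSeq_natCast` uses the `Fintype` instance
  have hA (k : ℕ) : A k = legendreSeq (ZMod p) k := by
    convert (legendreSeq_natCast p k).symm
  simp only [hA, ZMod.natCast_mod, Nat.cast_add]
  rw [ZMod.sum_range_natCast (fun a => legendreSeq (ZMod p) a * legendreSeq (ZMod p) (a + u))]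
  exact legendreSeq_autocorrelation (by rwa [ZMod.card]) hu0
end

section
/- The Frank sequence of length m² is a perfect m-phase sequence: for the sequence A of length m² defined by A(j + km) = exp(2πi·jk/m) for 0 ≤ j,k < m, all nontrivial periodic autocorrelations vanish: R_u(A) = 0 for 0 < u < m². -/
open Finset Complex Real

/-!
Write `t = j + m * k` with digits `j, k < m` and let `ψ` be the standard additive character of
`ZMod m`; then `A t = ψ (j * k)`. Shifting by `u = v + m * w` turns the phase `j * k` into
`(j + v) * (k + w + c)` modulo `m`, where the carry `c` depends only on `j`, so the phase difference
is `-v * k` plus a function of `j`. If `v ≠ 0`, the sum over `k` of each `j`-slice is a geometric sum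
of the nontrivial `m`-th root of unity `ψ (-v)`, hence zero. If `v = 0`, then `w ≠ 0`, the phase
difference is `-w * j`, and the sum over `j` vanishes for the same reason.
-/

theorem Finset.sum_range_mul_eq_sum_sum {M : Type*} [AddCommMonoid M] (f : ℕ → M) (m n : ℕ) :
    ∑ t ∈ range (m * n), f t = ∑ k ∈ range n, ∑ j ∈ range m, f (j + m * k) := by
  induction n with
  | zero => simp
  | succ n ih => rw [Nat.mul_succ, sum_range_add, ih, sum_range_succ]; simp only [add_comm]

theorem AddChar.sum_range_natCast_mul_eq_zero {R : Type*} [CommRing R] [IsDomain R] {m : ℕ}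
    (ψ : AddChar (ZMod m) R) {x : ZMod m} (hx : ψ x ≠ 1) :
    ∑ k ∈ range m, ψ (k * x) = 0 := by
  have hpow : ψ x ^ m = 1 := by
    rw [← ψ.map_nsmul_eq_pow, nsmul_eq_mul, ZMod.natCast_self, zero_mul, ψ.map_zero_eq_one]
  have hgeom := geom_sum_mul (ψ x) m
  rw [hpow, sub_self, mul_eq_zero] at hgeom
  simp_rw [← nsmul_eq_mul, ψ.map_nsmul_eq_pow]
  exact hgeom.resolve_right (sub_ne_zero.mpr hx)

theorem ZMod.stdAddChar_ne_one {m : ℕ} [NeZero m] {x : ZMod m} (hx : x ≠ 0) :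
    ZMod.stdAddChar x ≠ 1 := by
  rwa [← (ZMod.stdAddChar (N := m)).map_zero_eq_one, ZMod.injective_stdAddChar.ne_iff]

theorem ZMod.natCast_ne_zero_of_pos_of_lt {m a : ℕ} (ha : 0 < a) (ham : a < m) :
    (a : ZMod m) ≠ 0 := by
  rw [Ne, ZMod.natCast_eq_zero_iff]
  exact fun hdvd => (Nat.le_of_dvd ha hdvd).not_gt ham

/-- For `t = j + m * k` with `j < m` this is `j * k`, since `(t : ZMod m) = j`. -/
def frankPhase (m t : ℕ) : ZMod m := t * (t / m : ℕ)

theorem exp_frank_eq_stdAddChar (m t : ℕ) [NeZero m] :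
    Complex.exp (2 * Real.pi * Complex.I * ((t % m : ℕ) * (t / m : ℕ) / m)) =
      ZMod.stdAddChar (frankPhase m t) := by
  have := ZMod.stdAddChar_coe (N := m) ((t % m : ℕ) * (t / m : ℕ))
  simp only [Int.cast_mul, Int.cast_natCast, ZMod.natCast_mod] at this
  rw [frankPhase, this, ← mul_div_assoc]

theorem frankPhase_mod_mul_self (m t : ℕ) : frankPhase m (t % (m * m)) = frankPhase m t := by
  rw [frankPhase, frankPhase, Nat.mod_mul_right_div_self, ZMod.natCast_mod,
    ← ZMod.natCast_mod, Nat.mod_mod_of_dvd _ (dvd_mul_right m m), ZMod.natCast_mod]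

theorem frankPhase_add_mul (m j k : ℕ) [NeZero m] :
    frankPhase m (j + m * k) = j * (j / m + k : ℕ) := by
  rw [frankPhase, Nat.add_mul_div_left _ _ (Nat.pos_of_neZero m)]
  simp

theorem frankPhase_sub_frankPhase_add {m j : ℕ} [NeZero m] (hj : j < m) (k v w : ℕ) :
    frankPhase m (j + m * k) - frankPhase m (j + m * k + (v + m * w)) =
      k * -(v : ZMod m) - (j + v : ℕ) * ((j + v) / m + w : ℕ) := by
  rw [show j + m * k + (v + m * w) = (j + v) + m * (k + w) by ring, frankPhase_add_mul,
    frankPhase_add_mul, Nat.div_eq_of_lt hj]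
  push_cast
  ring

theorem sum_high_stdAddChar_frankPhase_sub_eq_zero {m v : ℕ} [NeZero m] (hv0 : 0 < v)
    (hv : v < m) (w : ℕ) {j : ℕ} (hj : j < m) :
    ∑ k ∈ range m, ZMod.stdAddChar
      (frankPhase m (j + m * k) - frankPhase m (j + m * k + (v + m * w))) = 0 := by
  calc _ = ∑ k ∈ range m, ZMod.stdAddChar ((k : ZMod m) * -(v : ZMod m)) *
        ZMod.stdAddChar (-(((j + v : ℕ) : ZMod m) * (((j + v) / m + w : ℕ) : ZMod m))) :=
        sum_congr rfl fun k _ => by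
          rw [frankPhase_sub_frankPhase_add hj, sub_eq_add_neg, AddChar.map_add_eq_mul]
    _ = 0 := by
      rw [← sum_mul, AddChar.sum_range_natCast_mul_eq_zero _ (ZMod.stdAddChar_ne_one
        (neg_ne_zero.mpr (ZMod.natCast_ne_zero_of_pos_of_lt hv0 hv))), zero_mul]

theorem sum_low_stdAddChar_frankPhase_sub_eq_zero {m w : ℕ} [NeZero m] (hw0 : 0 < w)
    (hw : w < m) (k : ℕ) :
    ∑ j ∈ range m, ZMod.stdAddChar
      (frankPhase m (j + m * k) - frankPhase m (j + m * k + m * w)) = 0 := by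
  calc _ = ∑ j ∈ range m, ZMod.stdAddChar ((j : ZMod m) * -(w : ZMod m)) :=
        sum_congr rfl fun j hj => by
          rw [← zero_add (m * w), frankPhase_sub_frankPhase_add (mem_range.mp hj), Nat.add_zero,
            Nat.div_eq_of_lt (mem_range.mp hj)]
          congr 1
          push_cast
          ring
    _ = 0 := AddChar.sum_range_natCast_mul_eq_zero _
        (ZMod.stdAddChar_ne_one (neg_ne_zero.mpr (ZMod.natCast_ne_zero_of_pos_of_lt hw0 hw)))

theorem frank_sequence_perfect (m : ℕ) (hm : 0 < m) :
    let n := m ^ 2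
    let A : ℕ → ℂ := fun t =>
      Complex.exp (2 * Real.pi * Complex.I * ((t % m : ℕ) * (t / m : ℕ) / m))
    ∀ u, 0 < u → u < n →
      (∑ t ∈ Finset.range n, A t * (starRingEnd ℂ) (A ((t + u) % n))) = 0 := by
  intro n A u hu hun
  have : NeZero m := ⟨hm.ne'⟩
  have hterm (t : ℕ) : A t * starRingEnd ℂ (A ((t + u) % n)) =
      ZMod.stdAddChar (frankPhase m t - frankPhase m (t + u)) := by
    simp only [A, exp_frank_eq_stdAddChar, n, sq, frankPhase_mod_mul_self, sub_eq_add_neg,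
      AddChar.map_add_eq_mul, AddChar.map_neg_eq_conj]
  obtain ⟨v, w, hv, hw, rfl⟩ : ∃ v w, v < m ∧ w < m ∧ u = v + m * w :=
    ⟨u % m, u / m, Nat.mod_lt u hm, Nat.div_lt_of_lt_mul (by rwa [← sq]),
      (Nat.mod_add_div u m).symm⟩
  rw [sum_congr rfl fun t _ => hterm t, show n = m * m from sq m, sum_range_mul_eq_sum_sum]
  rcases Nat.eq_zero_or_pos v with rfl | hv0
  · rw [zero_add] at hu ⊢
    exact sum_eq_zero fun k _ =>
      sum_low_stdAddChar_frankPhase_sub_eq_zero (Nat.pos_of_mul_pos_left hu) hw k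
  · rw [sum_comm]
    exact sum_eq_zero fun j hj =>
      sum_high_stdAddChar_frankPhase_sub_eq_zero hv0 hv w (mem_range.mp hj)
end

section
/- The Chu sequence of even length m, defined by A(k) = exp(πi·k²/m), is a perfect sequence: R_u(A) = 0 for all 0 < u < m. -/
/-!
Write `A k = exp (π i k² / m)`. For even `m` the sequence is `m`-periodic, since
`(k + m)² - k² = 2km + m²` is a multiple of `2m`. Hence
`A k * conj (A (k + u)) = exp (-π i u² / m) * ζ ^ k` with `ζ = exp (-2π i u / m)`,
and for `0 < u < m` the element `ζ` is an `m`-th root of unity different from `1`,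
so the geometric sum over a full period vanishes.
-/

open Finset Complex Real
open scoped ComplexConjugate

theorem geom_sum_eq_zero_of_pow_eq_one {R : Type*} [CommRing R] [IsDomain R] {ζ : R} {n : ℕ}
    (hζn : ζ ^ n = 1) (hζ : ζ ≠ 1) : ∑ i ∈ range n, ζ ^ i = 0 :=
  eq_zero_of_ne_zero_of_mul_left_eq_zero (sub_ne_zero_of_ne hζ.symm) <| by
    rw [mul_neg_geom_sum, hζn, sub_self]

theorem exp_neg_two_pi_mul_I_mul_div_ne_one {m u : ℕ} (hu : 0 < u) (hum : u < m) :
    exp (-(2 * π * I * u / m)) ≠ 1 := by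
  have hprim := (isPrimitiveRoot_exp m (by omega)).inv
  have := hprim.pow_ne_one_of_pos_of_lt hu.ne' hum
  rwa [← Complex.exp_neg, ← Complex.exp_nat_mul, mul_neg, mul_div_assoc', mul_comm] at this

theorem exp_neg_two_pi_mul_I_mul_div_pow_eq_one (m u : ℕ) :
    exp (-(2 * π * I * u / m)) ^ m = 1 := by
  rcases eq_or_ne m 0 with rfl | hm
  · simp
  have hm' : (m : ℂ) ≠ 0 := by exact_mod_cast hm
  rw [← Complex.exp_nat_mul, ← exp_int_mul_two_pi_mul_I (-u)]
  congr 1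
  push_cast
  field_simp

namespace Chu

noncomputable def seq (m k : ℕ) : ℂ := exp (π * I * (k ^ 2 : ℕ) / m)

theorem seq_periodic {m : ℕ} (hm : Even m) : Function.Periodic (seq m) m := by
  intro k
  obtain ⟨s, rfl⟩ := hm
  rcases Nat.eq_zero_or_pos s with rfl | hs
  · simp
  have hs' : (s : ℂ) ≠ 0 := by exact_mod_cast hs.ne'
  have hexp : (π : ℂ) * I * ((k + (s + s)) ^ 2 : ℕ) / (s + s : ℕ)
      = π * I * (k ^ 2 : ℕ) / (s + s : ℕ) + (k + s : ℕ) * (2 * π * I) := by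
    push_cast
    field_simp
    ring
  rw [seq, seq, hexp, Complex.exp_add, Complex.exp_nat_mul, Complex.exp_two_pi_mul_I, one_pow,
    mul_one]

theorem conj_seq (m k : ℕ) : conj (seq m k) = exp (-(π * I * (k ^ 2 : ℕ) / m)) := by
  rw [seq, ← Complex.exp_conj]
  simp [map_div₀, conj_I, neg_div]

theorem seq_mul_conj_seq_add (m k u : ℕ) :
    seq m k * conj (seq m (k + u)) =
      exp (-(π * I * (u ^ 2 : ℕ) / m)) * exp (-(2 * π * I * u / m)) ^ k := by
  rcases eq_or_ne m 0 with rfl | hm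
  · simp [seq]
  have hm' : (m : ℂ) ≠ 0 := by exact_mod_cast hm
  rw [conj_seq, seq, ← Complex.exp_nat_mul, ← Complex.exp_add, ← Complex.exp_add]
  congr 1
  push_cast
  field_simp
  ring

end Chu

theorem chu_sequence_perfect_general (m : ℕ) (heven : Even m) :
    let A : ℕ → ℂ := fun k => Complex.exp (Real.pi * Complex.I * (k ^ 2 : ℕ) / m)
    ∀ u, 0 < u → u < m →
      (∑ k ∈ Finset.range m, A k * (starRingEnd ℂ) (A ((k + u) % m))) = 0 := by
  intro A u hu hum
  change ∑ k ∈ range m, Chu.seq m k * conj (Chu.seq m ((k + u) % m)) = 0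
  simp_rw [(Chu.seq_periodic heven).map_mod_nat, Chu.seq_mul_conj_seq_add, ← mul_sum]
  rw [geom_sum_eq_zero_of_pow_eq_one (exp_neg_two_pi_mul_I_mul_div_pow_eq_one m u)
    (exp_neg_two_pi_mul_I_mul_div_ne_one hu hum), mul_zero]

theorem chu_sequence_perfect (m : ℕ) (hm : 0 < m) (heven : Even m) :
    let A : ℕ → ℂ := fun k => Complex.exp (Real.pi * Complex.I * (k ^ 2 : ℕ) / m)
    ∀ u, 0 < u → u < m →
      (∑ k ∈ Finset.range m, A k * (starRingEnd ℂ) (A ((k + u) % m))) = 0 :=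
  chu_sequence_perfect_general m heven
end

section
/- If p is an odd prime and A, B ∈ ℤ[z] are polynomials such that A(z)·A(z⁻¹) + B(z)·B(z⁻¹) ≡ 0 (mod p) as Laurent polynomials in ℤ[z, z⁻¹], and A, B are not both zero modulo p, then p ≡ 1 (mod 4). -/
/-!
If `-1` is not a square in the field `K`, then evaluating `A(z)A(z⁻¹) + B(z)B(z⁻¹) = 0` at
`z = 1` gives `A(1)² + B(1)² = 0`, hence `A(1) = B(1) = 0`. Dividing both `A` and `B` by `z - 1`
multiplies the identity by the nonzero factor `(z - 1)(z⁻¹ - 1)`, so it persists with smaller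
degrees, and infinite descent forces `A = B = 0`. Over `𝔽_p`, `-1` is a square exactly when
`p ≢ 3 (mod 4)`.
-/

open Polynomial LaurentPolynomial

namespace LaurentPolynomial

variable {R : Type*} [CommRing R]

theorem eval₂_one_invert (f : R[T;T⁻¹]) :
    eval₂ (RingHom.id R) 1 (invert f) = eval₂ (RingHom.id R) 1 f := by
  induction f using LaurentPolynomial.induction_on' with
  | add p q hp hq => rw [map_add, map_add, hp, hq, map_add]
  | C_mul_T n a => simp

end LaurentPolynomial

namespace Polynomial

variable {R : Type*} [CommRing R]

/-- The aperiodic autocorrelation `f(z) f(z⁻¹)` of a polynomial, as a Laurent polynomial. -/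
noncomputable def autocorrelation (f : R[X]) : R[T;T⁻¹] :=
  toLaurent f * invert (toLaurent f)

theorem autocorrelation_mul (f g : R[X]) :
    autocorrelation (f * g) = autocorrelation f * autocorrelation g := by
  simp only [autocorrelation, map_mul]
  ring

theorem autocorrelation_ne_zero [IsDomain R] {f : R[X]} (hf : f ≠ 0) :
    autocorrelation f ≠ 0 :=
  mul_ne_zero (toLaurent_ne_zero.mpr hf)
    ((map_ne_zero_iff _ invert.injective).mpr (toLaurent_ne_zero.mpr hf))

theorem eval₂_one_autocorrelation (f : R[X]) :
    LaurentPolynomial.eval₂ (RingHom.id R) 1 (autocorrelation f) = f.eval 1 ^ 2 := by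
  rw [autocorrelation, map_mul, eval₂_one_invert, eval₂_toLaurent, Units.val_one, eval₂_id, sq]

variable {K : Type*} [Field K]

theorem eval_one_eq_zero_of_autocorrelation_add_eq_zero (hK : ¬IsSquare (-1 : K)) {f g : K[X]}
    (hfg : autocorrelation f + autocorrelation g = 0) : f.eval 1 = 0 := by
  have hsum : f.eval 1 ^ 2 + g.eval 1 ^ 2 = 0 := by
    simpa only [map_add, eval₂_one_autocorrelation, map_zero] using
      congrArg (LaurentPolynomial.eval₂ (RingHom.id K) 1) hfg
  have hg1 : g.eval 1 = 0 := by
    by_contra hg1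
    exact hK ⟨f.eval 1 / g.eval 1, by field_simp; linear_combination -hsum⟩
  simpa [hg1] using hsum

theorem eq_zero_of_autocorrelation_add_eq_zero (hK : ¬IsSquare (-1 : K)) {f g : K[X]}
    (hfg : autocorrelation f + autocorrelation g = 0) : f = 0 := by
  by_contra hf
  obtain ⟨f', hf'⟩ : X - C 1 ∣ f :=
    dvd_iff_isRoot.mpr (eval_one_eq_zero_of_autocorrelation_add_eq_zero hK hfg)
  obtain ⟨g', hg'⟩ : X - C 1 ∣ g := dvd_iff_isRoot.mpr
    (eval_one_eq_zero_of_autocorrelation_add_eq_zero hK ((add_comm _ _).trans hfg))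
  have hfg' : autocorrelation f' + autocorrelation g' = 0 := by
    rw [hf', hg', autocorrelation_mul, autocorrelation_mul, ← mul_add] at hfg
    exact (mul_eq_zero.mp hfg).resolve_left (autocorrelation_ne_zero (X_sub_C_ne_zero 1))
  have hf'0 : f' ≠ 0 := by
    rintro rfl
    exact hf (by rw [hf', mul_zero])
  exact hf'0 (eq_zero_of_autocorrelation_add_eq_zero hK hfg')
termination_by f.natDegree
decreasing_by
  rw [hf', natDegree_mul (X_sub_C_ne_zero 1) hf'0, natDegree_X_sub_C]
  omega

end Polynomial

theorem eliahou_kervaire_saffari (p : ℕ) (hp : p.Prime) (hodd : Odd p)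
    (A B : Polynomial ℤ)
    (hAB : (A.map (Int.castRingHom (ZMod p))).toLaurent *
        LaurentPolynomial.invert ((A.map (Int.castRingHom (ZMod p))).toLaurent) +
      (B.map (Int.castRingHom (ZMod p))).toLaurent *
        LaurentPolynomial.invert ((B.map (Int.castRingHom (ZMod p))).toLaurent) = 0)
    (hnz : ¬(A.map (Int.castRingHom (ZMod p)) = 0 ∧ B.map (Int.castRingHom (ZMod p)) = 0)) :
    p % 4 = 1 := by
  have : Fact p.Prime := ⟨hp⟩
  have hsq : IsSquare (-1 : ZMod p) := by
    by_contra hsq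
    exact hnz ⟨eq_zero_of_autocorrelation_add_eq_zero hsq hAB,
      eq_zero_of_autocorrelation_add_eq_zero hsq ((add_comm _ _).trans hAB)⟩
  have hp4 := ZMod.exists_sq_eq_neg_one_iff.mp hsq
  obtain ⟨t, rfl⟩ := hodd
  omega
end

section
/- If (A, B) is a binary Golay pair of length n > 1 (i.e., C_u(A) + C_u(B) = 0 for all 0 < u < n), then n is even. -/
/-!
Reduce modulo 4. For odd `x, y` we have `x * y ≡ x + y - 1 [ZMOD 4]`, since
`x * y - (x + y - 1) = (x - 1) * (y - 1)` is a product of two even numbers. This linearises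
every autocorrelation of a `±1` sequence: for odd length `n = 2m + 1` the two linear sums
for the shifts `m` and `m + 1` differ only in the middle entry, which gives
`C_m(X) - C_{m+1}(X) ≡ 2 X(m) - 1 ≡ 1 [ZMOD 4]`. Adding this for `A` and `B` gives
`0 ≡ 2 [ZMOD 4]` for a Golay pair.
-/

open Finset

def aperiodicAutocorrelation (X : ℕ → ℤ) (n u : ℕ) : ℤ :=
  ∑ k ∈ range (n - u), X k * X (k + u)

theorem Int.mul_modEq_add_sub_one_of_odd {x y : ℤ} (hx : Odd x) (hy : Odd y) :
    x * y ≡ x + y - 1 [ZMOD 4] := by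
  obtain ⟨a, rfl⟩ := hx
  obtain ⟨b, rfl⟩ := hy
  exact Int.modEq_iff_dvd.mpr ⟨-(a * b), by ring⟩

theorem sum_mul_shift_modEq (X : ℕ → ℤ) {N u : ℕ} (hX : ∀ k < N + u, Odd (X k)) :
    ∑ k ∈ range N, X k * X (k + u) ≡ ∑ k ∈ range N, (X k + X (k + u)) - N [ZMOD 4] := by
  have hterm : ∀ k ∈ range N, X k * X (k + u) ≡ X k + X (k + u) - 1 [ZMOD 4] := fun k hk =>
    have hk : k < N := mem_range.mp hk
    Int.mul_modEq_add_sub_one_of_odd (hX k (by omega)) (hX (k + u) (by omega))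
  simpa [sum_sub_distrib] using Int.ModEq.sum hterm

theorem aperiodicAutocorrelation_sub_succ_modEq_one (X : ℕ → ℤ) (m : ℕ)
    (hX : ∀ k < 2 * m + 1, Odd (X k)) :
    aperiodicAutocorrelation X (2 * m + 1) m - aperiodicAutocorrelation X (2 * m + 1) (m + 1)
      ≡ 1 [ZMOD 4] := by
  have hm : aperiodicAutocorrelation X (2 * m + 1) m
      ≡ ∑ k ∈ range (m + 1), (X k + X (k + m)) - (m + 1 : ℕ) [ZMOD 4] := by
    rw [aperiodicAutocorrelation, show 2 * m + 1 - m = m + 1 by omega]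
    exact sum_mul_shift_modEq X fun k hk => hX k (by omega)
  have hm' : aperiodicAutocorrelation X (2 * m + 1) (m + 1)
      ≡ ∑ k ∈ range m, (X k + X (k + (m + 1))) - m [ZMOD 4] := by
    rw [aperiodicAutocorrelation, show 2 * m + 1 - (m + 1) = m by omega]
    exact sum_mul_shift_modEq X fun k hk => hX k (by omega)
  have hmid : 2 * X m ≡ 2 [ZMOD 4] := by
    obtain ⟨a, ha⟩ := hX m (by omega)
    exact Int.modEq_iff_dvd.mpr ⟨-a, by rw [ha]; ring⟩
  have hsplit : ∑ k ∈ range (m + 1), (X k + X (k + m))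
      = ∑ k ∈ range m, (X k + X (k + (m + 1))) + 2 * X m := by
    rw [sum_add_distrib, sum_add_distrib, sum_range_succ, sum_range_succ']
    simp only [zero_add, show ∀ k, k + 1 + m = k + (m + 1) from fun k => by omega]
    ring
  calc _ ≡ (∑ k ∈ range (m + 1), (X k + X (k + m)) - (m + 1 : ℕ))
          - (∑ k ∈ range m, (X k + X (k + (m + 1))) - m) [ZMOD 4] := hm.sub hm'
    _ = 2 * X m - 1 := by rw [hsplit]; push_cast; ring
    _ ≡ 2 - 1 [ZMOD 4] := hmid.sub_right 1

theorem binary_golay_pair_even_length (n : ℕ) (hn : 1 < n) (A B : ℕ → ℤ)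
    (hA : ∀ k < n, A k = 1 ∨ A k = -1) (hB : ∀ k < n, B k = 1 ∨ B k = -1)
    (hgolay : ∀ u, 0 < u → u < n →
      (∑ k ∈ Finset.range (n - u), A k * A (k + u)) +
        (∑ k ∈ Finset.range (n - u), B k * B (k + u)) = 0) :
    Even n := by
  have odd_of_sign {x : ℤ} (hx : x = 1 ∨ x = -1) : Odd x := by
    rcases hx with rfl | rfl <;> decide
  by_contra hodd
  obtain ⟨m, rfl⟩ := Nat.not_even_iff_odd.mp hodd
  have hC : ∀ u, 0 < u → u < 2 * m + 1 → aperiodicAutocorrelation A (2 * m + 1) u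
      + aperiodicAutocorrelation B (2 * m + 1) u = 0 := hgolay
  have hm := hC m (by omega) (by omega)
  have hm' := hC (m + 1) (by omega) (by omega)
  have h4 := (aperiodicAutocorrelation_sub_succ_modEq_one A m fun k hk => odd_of_sign (hA k hk)).add
    (aperiodicAutocorrelation_sub_succ_modEq_one B m fun k hk => odd_of_sign (hB k hk))
  rw [show _ - _ + (_ - _) = (0 : ℤ) by linear_combination hm - hm'] at h4
  exact absurd h4 (by decide)
end
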